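/- Let x(t) = (ξ(t), δω(t)) ∈ ℝ⁶ solve ẋ = A x where A is the linearized spherical pendulum matrix along a solution (q(t), ω(t)) of the closed-loop dynamics. If the constraints q(0)·ξ(0) = 0 and -ω(0)·(q(0) × ξ(0)) + q(0)·δω(0) = 0 hold at t = 0, then q(t)·ξ(t) = 0 and -ω(t)·(q(t) × ξ(t)) + q(t)·δω(t) = 0 for all t; i.e., the constraint set Cx = 0 is flow-invariant. -/

import Mathlib

open Matrix
open scoped InnerProductSpace

/-- `ℝ³` with the Euclidean inner product and norm. -/
abbrev E3 : Type := EuclideanSpace ℝ (Fin 3)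

/-- The cross product on `ℝ³`. -/
noncomputable def cross (x y : E3) : E3 := WithLp.toLp 2 (crossProduct x y)

/-- The hat map: `hat x` is the skew-symmetric matrix with `(hat x).mulVec y = x × y`. -/
def hat (x : E3) : Matrix (Fin 3) (Fin 3) ℝ :=
  !![0, -x 2, x 1; x 2, 0, -x 0; -x 1, x 0, 0]

/-- Reinterpret a plain vector as an element of Euclidean space. -/
def toE3 (x : Fin 3 → ℝ) : E3 := WithLp.toLp 2 x

/-! Since `‖q‖ = 1`, the derivative of `c₁ = ⟪q, ξ⟫` vanishes identically, because the cross
product by `ω` is skew-adjoint; so `c₁ ≡ 0`. Given `c₁ = 0` and `⟪q, ω⟫ = 0`, the derivative of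
`c₂ = -⟪ω, q × ξ⟫ + ⟪q, δω⟫` is `-kω c₂`, so `e^{kω t} c₂` is constant and `c₂ ≡ 0`. -/

theorem eq_zero_of_hasDerivAt_const_mul {f : ℝ → ℝ} {k : ℝ} (hf : ∀ t, HasDerivAt f (k * f t) t)
    (h₀ : f 0 = 0) (t : ℝ) : f t = 0 := by
  have hg : ∀ s, HasDerivAt (fun s => Real.exp (s * -k) * f s) 0 s := fun s =>
    (((hasDerivAt_mul_const (-k)).exp).mul (hf s)).congr_deriv (by ring)
  simpa [h₀] using
    is_const_of_deriv_eq_zero (fun s => (hg s).differentiableAt) (fun s => (hg s).deriv) t 0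

theorem inner_eq_dotProduct (x y : E3) : ⟪x, y⟫_ℝ = x.ofLp ⬝ᵥ y.ofLp := by
  simp [EuclideanSpace.inner_eq_star_dotProduct, dotProduct_comm]

theorem ofLp_cross (x y : E3) : (cross x y).ofLp = x.ofLp ⨯₃ y.ofLp := rfl

theorem inner_cross_left_eq_neg (a b c : E3) : ⟪cross a b, c⟫_ℝ = -⟪b, cross a c⟫_ℝ := by
  rw [inner_eq_dotProduct, inner_eq_dotProduct, ofLp_cross, ofLp_cross, dotProduct_comm,
    triple_product_permutation, triple_product_permutation b, ← cross_anticomm, dotProduct_neg]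

theorem hat_mulVec (x y : E3) : hat x *ᵥ y.ofLp = (cross x y).ofLp := by
  ext i
  fin_cases i <;>
  · simp only [hat, cross, cross_apply, cons_mulVec, cons_dotProduct, empty_mulVec,
      dotProduct_of_isEmpty, vecHead, vecTail, Function.comp_apply, Fin.succ_zero_eq_one,
      Fin.succ_one_eq_two, cons_val_zero, cons_val_one, cons_val, Fin.isValue, Fin.zero_eta,
      Fin.mk_one, Fin.reduceFinMk]
    ring

theorem vecMulVec_mul_mulVec {R n : Type*} [CommSemiring R] [Fintype n] (u v : n → R)
    (M : Matrix n n R) (x : n → R) : (vecMulVec u v * M) *ᵥ x = (v ⬝ᵥ M *ᵥ x) • u := by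
  rw [← mulVec_mulVec, vecMulVec_mulVec, op_smul_eq_smul]

theorem toE3_vecMulVec_mul_hat_mulVec (q ω ξ : E3) :
    toE3 ((vecMulVec q q * hat ω) *ᵥ ξ) = ⟪q, cross ω ξ⟫_ℝ • q := by
  rw [vecMulVec_mul_mulVec, hat_mulVec, ← inner_eq_dotProduct]
  rfl

theorem toE3_one_sub_vecMulVec_mulVec (q x : E3) :
    toE3 ((1 - vecMulVec q q) *ᵥ x) = x - ⟪q, x⟫_ℝ • q := by
  rw [sub_mulVec, one_mulVec, vecMulVec_mulVec, op_smul_eq_smul, ← inner_eq_dotProduct]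
  rfl

theorem toE3_smul_hat_mul_hat_mulVec (c : ℝ) (a b x : E3) :
    toE3 ((c • (hat a * hat b)) *ᵥ x) = c • cross a (cross b x) := by
  rw [smul_mulVec, ← mulVec_mulVec, hat_mulVec, hat_mulVec]
  rfl

noncomputable def crossBilinear : E3 →L[ℝ] E3 →L[ℝ] E3 :=
  ((crossProduct.compl₁₂ (WithLp.linearEquiv 2 ℝ (Fin 3 → ℝ)).toLinearMap
    (WithLp.linearEquiv 2 ℝ (Fin 3 → ℝ)).toLinearMap).compr₂
      (WithLp.linearEquiv 2 ℝ (Fin 3 → ℝ)).symm.toLinearMap).toContinuousBilinearMap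

theorem HasDerivAt.cross {f g : ℝ → E3} {f' g' : E3} {t : ℝ} (hf : HasDerivAt f f' t)
    (hg : HasDerivAt g g' t) :
    HasDerivAt (fun s => _root_.cross (f s) (g s))
      (_root_.cross (f t) g' + _root_.cross f' (g t)) t :=
  crossBilinear.hasDerivAt_of_bilinear (fun _ => hf) (fun _ => hg)

section Flow

variable {qd : E3} {kq kω : ℝ} {q ω ξ δω : ℝ → E3} {t : ℝ}

theorem hasDerivAt_constraint₁ (hunit : ‖q t‖ = 1) (hq : HasDerivAt q (cross (ω t) (q t)) t)
    (hξ : HasDerivAt ξ (⟪q t, cross (ω t) (ξ t)⟫_ℝ • q t + (δω t - ⟪q t, δω t⟫_ℝ • q t)) t) :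
    HasDerivAt (fun s => ⟪q s, ξ s⟫_ℝ) 0 t := by
  refine (hq.inner ℝ hξ).congr_deriv ?_
  have hqq : ⟪q t, q t⟫_ℝ = 1 := by rw [real_inner_self_eq_norm_sq, hunit, one_pow]
  rw [inner_add_right, inner_sub_right, inner_smul_right, inner_smul_right, hqq,
    inner_cross_left_eq_neg]
  ring

theorem hasDerivAt_constraint₂ (horth : ⟪q t, ω t⟫_ℝ = 0) (hqξ : ⟪q t, ξ t⟫_ℝ = 0)
    (hq : HasDerivAt q (cross (ω t) (q t)) t)
    (hω : HasDerivAt ω (-(kω • ω t) - kq • cross qd (q t)) t)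
    (hξ : HasDerivAt ξ (⟪q t, cross (ω t) (ξ t)⟫_ℝ • q t + (δω t - ⟪q t, δω t⟫_ℝ • q t)) t)
    (hδω : HasDerivAt δω (kq • cross qd (cross (q t) (ξ t)) - kω • δω t) t) :
    HasDerivAt (fun s => -⟪ω s, cross (q s) (ξ s)⟫_ℝ + ⟪q s, δω s⟫_ℝ)
      (-kω * (-⟪ω t, cross (q t) (ξ t)⟫_ℝ + ⟪q t, δω t⟫_ℝ)) t := by
  refine ((hω.inner ℝ (hq.cross hξ)).neg.add (hq.inner ℝ hδω)).congr_deriv ?_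
  simp only [inner_eq_dotProduct, ofLp_cross, WithLp.ofLp_add, WithLp.ofLp_sub, WithLp.ofLp_smul,
    WithLp.ofLp_neg, cross_apply, vec3_dotProduct] at horth hqξ ⊢
  simp only [Fin.isValue, cons_val_zero, cons_val_one, cons_val, Pi.add_apply, Pi.smul_apply,
    smul_eq_mul, Pi.sub_apply, smul_cons, smul_empty, Pi.neg_apply]
  -- The `kq`-terms and the `δω`-terms cancel by the triple product identity; besides `-kω c₂`
  -- there remains `-⟪ω, (ω × q) × ξ⟫ = ‖ω‖² ⟪q, ξ⟫ - ⟪ω, ξ⟫ ⟪q, ω⟫`.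
  linear_combination (ω t 0 ^ 2 + ω t 1 ^ 2 + ω t 2 ^ 2) * hqξ
    - (ω t 0 * ξ t 0 + ω t 1 * ξ t 1 + ω t 2 * ξ t 2) * horth

end Flow

theorem linearized_constraints_flow_invariant_general
    (qd : E3) (kq kω : ℝ)
    (q ω ξ δω : ℝ → E3)
    (hunit : ∀ t : ℝ, ‖q t‖ = 1)
    (horth : ∀ t : ℝ, ⟪q t, ω t⟫_ℝ = 0)
    (hq : ∀ t : ℝ, HasDerivAt q (cross (ω t) (q t)) t)
    (hω : ∀ t : ℝ, HasDerivAt ω (-(kω • ω t) - kq • cross qd (q t)) t)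
    (hξ : ∀ t : ℝ, HasDerivAt ξ
      (toE3 ((vecMulVec (q t) (q t) * hat (ω t)).mulVec (ξ t))
        + toE3 (((1 : Matrix (Fin 3) (Fin 3) ℝ) - vecMulVec (q t) (q t)).mulVec (δω t))) t)
    (hδω : ∀ t : ℝ, HasDerivAt δω
      (toE3 ((kq • (hat qd * hat (q t))).mulVec (ξ t)) - kω • δω t) t)
    (h10 : ⟪q 0, ξ 0⟫_ℝ = 0)
    (h20 : -⟪ω 0, cross (q 0) (ξ 0)⟫_ℝ + ⟪q 0, δω 0⟫_ℝ = 0) :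
    ∀ t : ℝ, ⟪q t, ξ t⟫_ℝ = 0 ∧ -⟪ω t, cross (q t) (ξ t)⟫_ℝ + ⟪q t, δω t⟫_ℝ = 0 := by
  have hξ' (t : ℝ) :
      HasDerivAt ξ (⟪q t, cross (ω t) (ξ t)⟫_ℝ • q t + (δω t - ⟪q t, δω t⟫_ℝ • q t)) t := by
    simpa only [toE3_vecMulVec_mul_hat_mulVec, toE3_one_sub_vecMulVec_mulVec] using hξ t
  have hδω' (t : ℝ) : HasDerivAt δω (kq • cross qd (cross (q t) (ξ t)) - kω • δω t) t := by
    simpa only [toE3_smul_hat_mul_hat_mulVec] using hδω t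
  have hc₁ (t : ℝ) : ⟪q t, ξ t⟫_ℝ = 0 := by
    have hderiv (s : ℝ) := hasDerivAt_constraint₁ (hunit s) (hq s) (hξ' s)
    rw [is_const_of_deriv_eq_zero (fun s => (hderiv s).differentiableAt)
      (fun s => (hderiv s).deriv) t 0, h10]
  exact fun t => ⟨hc₁ t, eq_zero_of_hasDerivAt_const_mul
    (fun s => hasDerivAt_constraint₂ (horth s) (hc₁ s) (hq s) (hω s) (hξ' s) (hδω' s)) h20 t⟩

/-- The constraint set `C x = 0` of the linearized spherical pendulum dynamics
`ẋ = A x`, `x = (ξ, δω)`, is flow-invariant: if `q(0)⬝ξ(0) = 0` and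
`-ω(0)⬝(q(0) × ξ(0)) + q(0)⬝δω(0) = 0`, then these constraints hold for all time. -/
theorem linearized_constraints_flow_invariant
    (qd : E3) (hqd : ‖qd‖ = 1) (kq kω : ℝ) (hkq : 0 < kq) (hkω : 0 < kω)
    (q ω ξ δω : ℝ → E3)
    (hunit : ∀ t : ℝ, ‖q t‖ = 1)
    (horth : ∀ t : ℝ, ⟪q t, ω t⟫_ℝ = 0)
    (hq : ∀ t : ℝ, HasDerivAt q (cross (ω t) (q t)) t)
    (hω : ∀ t : ℝ, HasDerivAt ω (-(kω • ω t) - kq • cross qd (q t)) t)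
    (hξ : ∀ t : ℝ, HasDerivAt ξ
      (toE3 ((vecMulVec (q t) (q t) * hat (ω t)).mulVec (ξ t))
        + toE3 (((1 : Matrix (Fin 3) (Fin 3) ℝ) - vecMulVec (q t) (q t)).mulVec (δω t))) t)
    (hδω : ∀ t : ℝ, HasDerivAt δω
      (toE3 ((kq • (hat qd * hat (q t))).mulVec (ξ t)) - kω • δω t) t)
    (h10 : ⟪q 0, ξ 0⟫_ℝ = 0)
    (h20 : -⟪ω 0, cross (q 0) (ξ 0)⟫_ℝ + ⟪q 0, δω 0⟫_ℝ = 0) :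
    ∀ t : ℝ, ⟪q t, ξ t⟫_ℝ = 0 ∧ -⟪ω t, cross (q t) (ξ t)⟫_ℝ + ⟪q t, δω t⟫_ℝ = 0 :=
  linearized_constraints_flow_invariant_general qd kq kω q ω ξ δω hunit horth hq hω hξ hδω h10 h20
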